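/- arXiv:2203.08908 — 2 statements merged into one kernel-verified Lean document; each statement's English description precedes it below -/
import Mathlib

section
/- Let p and q be compactly supported Borel probability measures on ℝ^n. Then the β-admissible Wasserstein distance D_W^β(p, q) is nonincreasing in β, and inf_{β > 0} D_W^β(p, q) = ∫ d(x, supp(q)) dp(x).ration Consequently, inf_{β1 > 0, β2 > 0} D_W^{β1,β2}(p, q) = D_△(p, q), i.e. the limit of D_W^{β1,β2}(p, q) as β1, β2 → ∞ equals the symmetric support difference divergence. -/
open MeasureTheory Metric Set
open scoped ENNReal

noncomputable section

/-- The topological support of a Borel measure: the smallest closed set of full measure,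
realized as the intersection of all closed sets whose complement is null. -/
def msupport {X : Type*} [TopologicalSpace X] [MeasurableSpace X] (μ : Measure X) : Set X :=
  ⋂₀ {S : Set X | IsClosed S ∧ μ Sᶜ = 0}

/-- The symmetric support difference (SSD) divergence
`D_△(p, q) = ∫ d(x, supp q) dp + ∫ d(x, supp p) dq` (valued in `ℝ≥0∞`). -/
def Dtri {X : Type*} [MeasurableSpace X] [PseudoMetricSpace X] (p q : Measure X) : ℝ≥0∞ :=
  (∫⁻ x, ENNReal.ofReal (infDist x (msupport q)) ∂p) +
  (∫⁻ x, ENNReal.ofReal (infDist x (msupport p)) ∂q)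

/-- The Wasserstein-1 distance: infimum of `∫ d(x, y) dγ` over couplings of `p` and `q`. -/
def DW {X : Type*} [MeasurableSpace X] [PseudoMetricSpace X] (p q : Measure X) : ℝ≥0∞ :=
  ⨅ γ ∈ {γ : Measure (X × X) | γ.map Prod.fst = p ∧ γ.map Prod.snd = q},
    ∫⁻ z, ENNReal.ofReal (dist z.1 z.2) ∂γ

/-- The β-admissible Wasserstein distance: infimum of `∫ d(x, y) dγ` over measures `γ`
whose first marginal is `p` and whose second marginal is `≤ (1 + β) • q`. -/
def DWbeta {X : Type*} [MeasurableSpace X] [PseudoMetricSpace X]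
    (β : ℝ) (p q : Measure X) : ℝ≥0∞ :=
  ⨅ γ ∈ {γ : Measure (X × X) |
      γ.map Prod.fst = p ∧ γ.map Prod.snd ≤ (ENNReal.ofReal (1 + β)) • q},
    ∫⁻ z, ENNReal.ofReal (dist z.1 z.2) ∂γ

/-- The symmetrized (β₁, β₂)-admissible Wasserstein distance. -/
def DWsym {X : Type*} [MeasurableSpace X] [PseudoMetricSpace X]
    (β₁ β₂ : ℝ) (p q : Measure X) : ℝ≥0∞ :=
  DWbeta β₁ p q + DWbeta β₂ q p

open ProbabilityTheory

/-! Every admissible plan moves `p` into `supp q`, so it costs at least `∫ d(x, supp q) dp`,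
whatever `β`. Conversely, given `δ > 0`, cover the compact set `supp q` by finitely many
`δ`-balls centred in `supp q`; each has positive `q`-mass. Send `x` to `q` conditioned on a ball
whose centre is within `d(x, supp q) + δ` of `x`: this plan costs at most
`∫ d(x, supp q) dp + 2δ`, and its second marginal is at most `q / (smallest ball mass)`, so it is
`β`-admissible once `β` is large. -/

lemma msupport_eq_support {X : Type*} [TopologicalSpace X] [MeasurableSpace X] (μ : Measure X) :
    msupport μ = μ.support :=
  Measure.support_eq_sInter.symm

lemma antitone_DWbeta {X : Type*} [MeasurableSpace X] [PseudoMetricSpace X] (p q : Measure X) :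
    Antitone fun β => DWbeta β p q := fun _ _ hβ =>
  iInf₂_mono' fun γ ⟨hfst, hsnd⟩ =>
    ⟨γ, ⟨hfst, hsnd.trans fun s => by
      simp only [Measure.smul_apply, smul_eq_mul]
      gcongr⟩, le_rfl⟩

lemma exists_measurable_index_mem {α : Type*} [MeasurableSpace α] {U : ℕ → Set α}
    (hU : ∀ j, MeasurableSet (U j)) (hcov : ∀ x, ∃ j, x ∈ U j) :
    ∃ i : α → ℕ, Measurable i ∧ ∀ x, x ∈ U (i x) := by
  classical
  exact ⟨fun x => Nat.find (hcov x), measurable_find hcov hU, fun x => Nat.find_spec (hcov x)⟩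

lemma IsCompact.exists_finite_range_dist_lt_infDist_add {X : Type*} [PseudoMetricSpace X]
    {S : Set X} (hS : IsCompact S) (hne : S.Nonempty) {δ : ℝ} (hδ : 0 < δ) :
    ∃ c : ℕ → X, (range c).Finite ∧ range c ⊆ S ∧ ∀ x, ∃ j, dist x (c j) < infDist x S + δ := by
  obtain ⟨t, htS, htfin, hcov⟩ := finite_cover_balls_of_compact hS hδ
  have htne : t.Nonempty := by
    obtain ⟨y, hy, -⟩ := mem_iUnion₂.1 (hcov hne.some_mem)
    exact ⟨y, hy⟩
  obtain ⟨c, rfl⟩ := htfin.countable.exists_eq_range htne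
  refine ⟨c, htfin, htS, fun x => ?_⟩
  obtain ⟨y, hyS, hxy⟩ := hS.exists_infDist_eq_dist hne x
  obtain ⟨_, ⟨j, rfl⟩, hyj⟩ := mem_iUnion₂.1 (hcov hyS)
  refine ⟨j, ?_⟩
  calc dist x (c j) ≤ dist x y + dist y (c j) := dist_triangle _ _ _
    _ < infDist x S + δ := by rw [hxy]; linarith [mem_ball.1 hyj]

lemma ProbabilityTheory.cond_le_inv_smul {Ω : Type*} [MeasurableSpace Ω] (μ : Measure Ω)
    (s : Set Ω) : μ[|s] ≤ (μ s)⁻¹ • μ := fun t => by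
  simp only [cond, Measure.smul_apply, smul_eq_mul]
  gcongr
  exact Measure.restrict_le_self

lemma lintegral_dist_cond_ball_le {X : Type*} [PseudoMetricSpace X] [MeasurableSpace X]
    [OpensMeasurableSpace X] (μ : Measure X) {y : X} {r : ℝ} [IsProbabilityMeasure μ[|ball y r]]
    (x : X) : ∫⁻ z, ENNReal.ofReal (dist x z) ∂μ[|ball y r] ≤ ENNReal.ofReal (dist x y + r) := by
  calc ∫⁻ z, ENNReal.ofReal (dist x z) ∂μ[|ball y r]
      ≤ ∫⁻ _, ENNReal.ofReal (dist x y + r) ∂μ[|ball y r] := by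
        refine lintegral_mono_ae ?_
        filter_upwards [ae_cond_mem measurableSet_ball] with z hz
        gcongr
        linarith [dist_triangle x y z, mem_ball'.1 hz]
    _ = ENNReal.ofReal (dist x y + r) := by simp

section

variable {X : Type*} [PseudoMetricSpace X] [MeasurableSpace X] [OpensMeasurableSpace X]
  [SecondCountableTopology X]

lemma lintegral_infDist_msupport_le_DWbeta (p q : Measure X) (β : ℝ) :
    ∫⁻ x, ENNReal.ofReal (infDist x (msupport q)) ∂p ≤ DWbeta β p q := by
  refine le_iInf₂ fun γ ⟨hfst, hsnd⟩ => ?_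
  have hsupp : ∀ᵐ z ∂γ, z.2 ∈ msupport q := by
    refine ae_of_ae_map measurable_snd.aemeasurable (ae_iff.2 (le_antisymm ?_ bot_le))
    calc _ ≤ (ENNReal.ofReal (1 + β) • q) (msupport q)ᶜ := hsnd _
      _ = 0 := by simp [msupport_eq_support]
  have hmeas : Measurable fun x => ENNReal.ofReal (infDist x (msupport q)) :=
    (continuous_infDist_pt _).measurable.ennreal_ofReal
  calc ∫⁻ x, ENNReal.ofReal (infDist x (msupport q)) ∂p
      = ∫⁻ z, ENNReal.ofReal (infDist z.1 (msupport q)) ∂γ := by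
        rw [← hfst, lintegral_map hmeas measurable_fst]
    _ ≤ ∫⁻ z, ENNReal.ofReal (dist z.1 z.2) ∂γ := by
        refine lintegral_mono_ae ?_
        filter_upwards [hsupp] with z hz
        exact ENNReal.ofReal_le_ofReal (infDist_le_dist_of_mem hz)

lemma DWbeta_le_lintegral_of_kernel (p q : Measure X) [IsProbabilityMeasure p] {β : ℝ}
    (κ : Kernel X X) [IsMarkovKernel κ] (hκ : ∀ x, κ x ≤ ENNReal.ofReal (1 + β) • q) :
    DWbeta β p q ≤ ∫⁻ x, ∫⁻ y, ENNReal.ofReal (dist x y) ∂κ x ∂p := by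
  have hsnd : (p ⊗ₘ κ).map Prod.snd ≤ ENNReal.ofReal (1 + β) • q := by
    refine Measure.le_intro fun s hs _ => ?_
    calc (p ⊗ₘ κ).map Prod.snd s = ∫⁻ x, κ x s ∂p := by
          rw [← Measure.snd, Measure.snd_compProd, Measure.bind_apply hs κ.aemeasurable]
      _ ≤ ∫⁻ _, (ENNReal.ofReal (1 + β) • q) s ∂p := lintegral_mono fun x => hκ x s
      _ = _ := by simp
  calc DWbeta β p q ≤ ∫⁻ z, ENNReal.ofReal (dist z.1 z.2) ∂(p ⊗ₘ κ) :=
        iInf₂_le _ ⟨Measure.fst_compProd p κ, hsnd⟩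
    _ = _ := Measure.lintegral_compProd measurable_dist.ennreal_ofReal

lemma exists_markovKernel_le_smul_lintegral_dist_le (q : Measure X) [IsProbabilityMeasure q]
    (hqc : IsCompact (msupport q)) {δ : ℝ} (hδ : 0 < δ) :
    ∃ (κ : Kernel X X) (C : ℝ≥0∞), IsMarkovKernel κ ∧ C ≠ ∞ ∧ (∀ x, κ x ≤ C • q) ∧
      ∀ x, ∫⁻ y, ENNReal.ofReal (dist x y) ∂κ x
        ≤ ENNReal.ofReal (infDist x (msupport q) + 2 * δ) := by
  have hball : ∀ y ∈ msupport q, 0 < q (ball y δ) := fun y hy => by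
    rw [msupport_eq_support, Measure.mem_support_iff_forall] at hy
    exact hy _ (ball_mem_nhds y hδ)
  have hSne : (msupport q).Nonempty := by
    rw [msupport_eq_support]; exact Measure.nonempty_support (IsProbabilityMeasure.ne_zero q)
  set S := msupport q
  obtain ⟨c, hfin, hcS, hnear⟩ := hqc.exists_finite_range_dist_lt_infDist_add hSne hδ
  have hcball : ∀ j, q (ball (c j) δ) ≠ 0 := fun j => (hball _ (hcS ⟨j, rfl⟩)).ne'
  obtain ⟨_, ⟨j₀, rfl⟩, hmin⟩ :=
    exists_min_image (range c) (fun y => q (ball y δ)) hfin (range_nonempty c)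
  obtain ⟨i, hi, hic⟩ := exists_measurable_index_mem
    (U := fun j => {x | dist x (c j) < infDist x S + δ})
    (fun j => measurableSet_lt (by fun_prop) (by fun_prop)) hnear
  let κ : Kernel X X := (Kernel.ofFunOfCountable fun j => q[|ball (c j) δ]).comap i hi
  have hcond (j : ℕ) : IsProbabilityMeasure q[|ball (c j) δ] := cond_isProbabilityMeasure (hcball j)
  refine ⟨κ, (q (ball (c j₀) δ))⁻¹, ⟨fun x => hcond (i x)⟩, ENNReal.inv_ne_top.2 (hcball j₀),
    fun x => ?_, fun x => ?_⟩
  · refine (cond_le_inv_smul q _).trans fun s => ?_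
    simp only [Measure.smul_apply, smul_eq_mul]
    exact mul_le_mul_left (ENNReal.inv_le_inv.2 (hmin _ ⟨i x, rfl⟩)) _
  · have := hcond (i x)
    refine (lintegral_dist_cond_ball_le q x).trans (ENNReal.ofReal_le_ofReal ?_)
    linarith [show dist x (c (i x)) < infDist x S + δ from hic x]

lemma exists_DWbeta_le_lintegral_infDist_add (p q : Measure X) [IsProbabilityMeasure p]
    [IsProbabilityMeasure q] (hqc : IsCompact (msupport q)) {δ : ℝ} (hδ : 0 < δ) :
    ∃ β > 0, DWbeta β p q
      ≤ ∫⁻ x, ENNReal.ofReal (infDist x (msupport q)) ∂p + ENNReal.ofReal (2 * δ) := by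
  obtain ⟨κ, C, hκ, hC, hκq, hcost⟩ := exists_markovKernel_le_smul_lintegral_dist_le q hqc hδ
  have hCβ : C ≤ ENNReal.ofReal (1 + (C.toReal + 1)) :=
    (ENNReal.le_ofReal_iff_toReal_le hC (by positivity)).2 (by linarith)
  refine ⟨C.toReal + 1, by positivity, ?_⟩
  calc DWbeta (C.toReal + 1) p q ≤ ∫⁻ x, ∫⁻ y, ENNReal.ofReal (dist x y) ∂κ x ∂p :=
        DWbeta_le_lintegral_of_kernel p q κ fun x => (hκq x).trans (by gcongr)
    _ ≤ ∫⁻ x, ENNReal.ofReal (infDist x (msupport q)) + ENNReal.ofReal (2 * δ) ∂p := by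
        refine lintegral_mono fun x => (hcost x).trans_eq ?_
        exact ENNReal.ofReal_add infDist_nonneg (by positivity)
    _ = _ := lintegral_add_right _ measurable_const |>.trans (by simp)

lemma iInf_DWbeta_eq_lintegral_infDist (p q : Measure X) [IsProbabilityMeasure p]
    [IsProbabilityMeasure q] (hqc : IsCompact (msupport q)) :
    ⨅ β ∈ Ioi (0 : ℝ), DWbeta β p q = ∫⁻ x, ENNReal.ofReal (infDist x (msupport q)) ∂p := by
  refine le_antisymm (ENNReal.le_of_forall_pos_le_add fun ε hε _ => ?_)
    (le_iInf₂ fun β _ => lintegral_infDist_msupport_le_DWbeta p q β)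
  obtain ⟨β, hβ, hle⟩ := exists_DWbeta_le_lintegral_infDist_add p q hqc (half_pos hε)
  calc ⨅ β ∈ Ioi (0 : ℝ), DWbeta β p q ≤ DWbeta β p q := biInf_le _ hβ
    _ ≤ _ := hle
    _ = _ := by rw [mul_div_cancel₀ _ two_ne_zero]; simp

end

/-- **Proposition 3.** For compactly supported probability measures,
`β ↦ D_W^β(p, q)` is nonincreasing, its infimum over `β > 0` is `∫ d(x, supp q) dp`, and
consequently the infimum of `D_W^{β₁,β₂}(p, q)` over `β₁, β₂ > 0` (the limit as
`β₁, β₂ → ∞`) equals the SSD divergence `D_△(p, q)`. -/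
theorem beta_admissible_limit_is_ssd (n : ℕ)
    (p q : Measure (EuclideanSpace ℝ (Fin n)))
    [IsProbabilityMeasure p] [IsProbabilityMeasure q]
    (hpc : IsCompact (msupport p)) (hqc : IsCompact (msupport q)) :
    (∀ β₁ β₂ : ℝ, 0 < β₁ → β₁ ≤ β₂ → DWbeta β₂ p q ≤ DWbeta β₁ p q) ∧
    ((⨅ β ∈ Set.Ioi (0 : ℝ), DWbeta β p q)
      = ∫⁻ x, ENNReal.ofReal (infDist x (msupport q)) ∂p) ∧
    (⨅ β₁ ∈ Set.Ioi (0 : ℝ), ⨅ β₂ ∈ Set.Ioi (0 : ℝ), DWsym β₁ β₂ p q) = Dtri p q := by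
  refine ⟨fun _ _ _ h => antitone_DWbeta p q h, iInf_DWbeta_eq_lintegral_infDist p q hqc, ?_⟩
  rw [Dtri, ← iInf_DWbeta_eq_lintegral_infDist p q hqc,
    ← iInf_DWbeta_eq_lintegral_infDist q p hpc, ENNReal.iInf₂_add]
  simp_rw [ENNReal.add_iInf₂, DWsym]
end
end

section
/- For every pair of finite numbers β1, β2 > 0, there exist Borel probability measures p and q on ℝ (which can be taken supported on two points) such that supp(p) = supp(q), hence D_△(p, q) = 0, but D_W^{β1,β2}(p, q) > 0. -/
open MeasureTheory Metric Set
open scoped ENNReal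

noncomputable section

/-!
Take `p = ½ δ₀ + ½ δ₁` and `q = t δ₀ + (1 - t) δ₁` with `(1 + β₁) t = 1/4`: both have support
`{0, 1}`, so `D_△(p, q) = 0`. A plan `γ` for `D_W^{β₁}(p, q)` has first marginal `p` and second
marginal at most `(1 + β₁) q`, so of the mass `1/2` that `γ` takes from `0`, at most `1/4` can
stay at `0`; the remaining `1/4` travels to `1`, at cost at least `1/4`.
-/

section Support

variable {X : Type*} [TopologicalSpace X] [MeasurableSpace X] {μ : Measure X} {S : Set X}

lemma msupport_subset (hS : IsClosed S) (hμ : μ Sᶜ = 0) : msupport μ ⊆ S :=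
  sInter_subset_of_mem ⟨hS, hμ⟩

lemma mem_msupport_of_measure_singleton_ne_zero {x : X} (hx : μ {x} ≠ 0) : x ∈ msupport μ := by
  refine mem_sInter.2 fun S ⟨_, hS⟩ ↦ ?_
  by_contra hxS
  exact hx (measure_mono_null (singleton_subset_iff.2 hxS) hS)

lemma msupport_eq_of_atoms (hS : IsClosed S) (hμ : μ Sᶜ = 0) (hatoms : ∀ x ∈ S, μ {x} ≠ 0) :
    msupport μ = S :=
  (msupport_subset hS hμ).antisymm fun x hx ↦
    mem_msupport_of_measure_singleton_ne_zero (hatoms x hx)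

end Support

section Divergence

variable {X : Type*} [MeasurableSpace X] [PseudoMetricSpace X]

lemma lintegral_infDist_eq_zero {μ : Measure X} {S : Set X} (hμ : μ Sᶜ = 0) :
    ∫⁻ x, ENNReal.ofReal (infDist x S) ∂μ = 0 := by
  refine (lintegral_congr_ae ?_).trans lintegral_zero
  filter_upwards [measure_eq_zero_iff_ae_notMem.1 hμ] with x hx
  rw [infDist_zero_of_mem (not_not.1 hx), ENNReal.ofReal_zero]

lemma Dtri_eq_zero {p q : Measure X} (hp : p (msupport q)ᶜ = 0) (hq : q (msupport p)ᶜ = 0) :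
    Dtri p q = 0 := by
  rw [Dtri, lintegral_infDist_eq_zero hp, lintegral_infDist_eq_zero hq, add_zero]

end Divergence

section Transport

variable {X : Type*} [MeasurableSpace X] [MeasurableSingletonClass X] {γ : Measure (X × X)}
  {p q : Measure X} {c : ℝ≥0∞}

lemma tsub_le_measure_singleton_prod_compl (hfst : γ.map Prod.fst = p)
    (hsnd : γ.map Prod.snd ≤ c • q) (x : X) :
    p {x} - c * q {x} ≤ γ ({x} ×ˢ {x}ᶜ) := by
  have hcover : Prod.fst ⁻¹' {x} ⊆ ({x} ×ˢ {x}ᶜ) ∪ Prod.snd ⁻¹' {x} := by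
    rintro ⟨a, b⟩ rfl
    by_cases hb : b = a <;> simp [hb]
  rw [tsub_le_iff_right, ← hfst, Measure.map_apply measurable_fst (measurableSet_singleton x)]
  calc γ (Prod.fst ⁻¹' {x}) ≤ γ ({x} ×ˢ {x}ᶜ) + γ (Prod.snd ⁻¹' {x}) :=
        (measure_mono hcover).trans (measure_union_le _ _)
    _ ≤ γ ({x} ×ˢ {x}ᶜ) + c * q {x} := by
        gcongr
        exact (Measure.le_map_apply measurable_snd.aemeasurable _).trans (hsnd _)

variable [PseudoMetricSpace X]

lemma le_DWbeta_of_ae_eq_or_le_dist (β : ℝ) {x : X} {δ : ℝ}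
    (hq : ∀ᵐ y ∂q, y = x ∨ δ ≤ dist x y) :
    (p {x} - ENNReal.ofReal (1 + β) * q {x}) * ENNReal.ofReal δ ≤ DWbeta β p q := by
  refine le_iInf₂ fun γ ⟨hfst, hsnd⟩ ↦ ?_
  have hγ : ∀ᵐ z ∂γ, z.2 = x ∨ δ ≤ dist x z.2 :=
    ae_of_ae_map measurable_snd.aemeasurable
      ((Measure.absolutelyContinuous_of_le hsnd).trans Measure.smul_absolutelyContinuous hq)
  have hA : MeasurableSet ({x} ×ˢ {x}ᶜ : Set (X × X)) :=
    (measurableSet_singleton x).prod (measurableSet_singleton x).compl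
  calc (p {x} - ENNReal.ofReal (1 + β) * q {x}) * ENNReal.ofReal δ
      ≤ ENNReal.ofReal δ * γ ({x} ×ˢ {x}ᶜ) := by
        rw [mul_comm]; gcongr; exact tsub_le_measure_singleton_prod_compl hfst hsnd x
    _ = ∫⁻ z, ({x} ×ˢ {x}ᶜ : Set (X × X)).indicator (fun _ ↦ ENNReal.ofReal δ) z ∂γ :=
        (lintegral_indicator_const hA _).symm
    _ ≤ ∫⁻ z, ENNReal.ofReal (dist z.1 z.2) ∂γ := by
        refine lintegral_mono_ae ?_
        filter_upwards [hγ] with ⟨a, b⟩ hb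
        by_cases hz : (a, b) ∈ ({x} ×ˢ {x}ᶜ : Set (X × X))
        · rw [indicator_of_mem hz]
          obtain ⟨rfl, hba⟩ := hz
          exact ENNReal.ofReal_le_ofReal (hb.resolve_left hba)
        · rw [indicator_of_notMem hz]; exact zero_le

end Transport

section TwoPointMeasure

variable {X : Type*} [MeasurableSpace X]

def twoPointMeasure (x y : X) (t : ℝ) : Measure X :=
  ENNReal.ofReal t • Measure.dirac x + ENNReal.ofReal (1 - t) • Measure.dirac y

lemma isProbabilityMeasure_twoPointMeasure {x y : X} {t : ℝ} (ht₀ : 0 ≤ t) (ht₁ : t ≤ 1) :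
    IsProbabilityMeasure (twoPointMeasure x y t) := by
  constructor
  simp only [twoPointMeasure, Measure.add_apply, Measure.smul_apply, smul_eq_mul, measure_univ,
    mul_one]
  rw [← ENNReal.ofReal_add ht₀ (by linarith), add_sub_cancel, ENNReal.ofReal_one]

variable [MeasurableSingletonClass X] {x y : X} {t : ℝ}

lemma twoPointMeasure_singleton_left (hxy : x ≠ y) :
    twoPointMeasure x y t {x} = ENNReal.ofReal t := by
  simp [twoPointMeasure, hxy.symm]

lemma twoPointMeasure_singleton_right (hxy : x ≠ y) :
    twoPointMeasure x y t {y} = ENNReal.ofReal (1 - t) := by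
  simp [twoPointMeasure, hxy]

lemma twoPointMeasure_compl_pair : twoPointMeasure x y t ({x, y}ᶜ) = 0 := by
  simp [twoPointMeasure]

lemma ae_eq_or_eq_twoPointMeasure : ∀ᵐ z ∂twoPointMeasure x y t, z = x ∨ z = y :=
  measure_eq_zero_iff_ae_notMem.1 twoPointMeasure_compl_pair |>.mono fun _ hz ↦ not_not.1 hz

lemma msupport_twoPointMeasure [TopologicalSpace X] [T1Space X] (hxy : x ≠ y) (ht₀ : 0 < t)
    (ht₁ : t < 1) : msupport (twoPointMeasure x y t) = {x, y} := by
  refine msupport_eq_of_atoms (toFinite _).isClosed twoPointMeasure_compl_pair ?_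
  rintro z (rfl | rfl)
  · simpa [twoPointMeasure_singleton_left hxy]
  · simpa [twoPointMeasure_singleton_right hxy]

end TwoPointMeasure

theorem support_alignment_not_relaxed_alignment_general
    (β₁ β₂ : ℝ) (hβ₁ : 0 < β₁) :
    ∃ p q : Measure ℝ, IsProbabilityMeasure p ∧ IsProbabilityMeasure q ∧
      msupport p = msupport q ∧ Dtri p q = 0 ∧ 0 < DWsym β₁ β₂ p q := by
  set t : ℝ := 1 / (4 * (1 + β₁))
  have ht₀ : 0 < t := by positivity
  have ht₁ : t < 1 := by rw [div_lt_one (by positivity)]; linarith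
  have hmass : (1 + β₁) * t = 1 / 4 := by simp only [t]; field_simp
  set p := twoPointMeasure (0 : ℝ) 1 (1 / 2)
  set q := twoPointMeasure (0 : ℝ) 1 t
  have hsupp_p : msupport p = {0, 1} :=
    msupport_twoPointMeasure zero_ne_one (by norm_num) (by norm_num)
  have hsupp_q : msupport q = {0, 1} := msupport_twoPointMeasure zero_ne_one ht₀ ht₁
  have hq : ∀ᵐ y ∂q, y = 0 ∨ 1 ≤ dist 0 y := by
    filter_upwards [ae_eq_or_eq_twoPointMeasure] with y hy
    rcases hy with rfl | rfl
    · exact .inl rfl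
    · exact .inr (by simp [Real.dist_eq])
  have hcost := le_DWbeta_of_ae_eq_or_le_dist (p := p) β₁ hq
  rw [twoPointMeasure_singleton_left zero_ne_one, twoPointMeasure_singleton_left zero_ne_one,
    ← ENNReal.ofReal_mul (by linarith), hmass, ← ENNReal.ofReal_sub _ (by norm_num)] at hcost
  refine ⟨p, q, isProbabilityMeasure_twoPointMeasure (by norm_num) (by norm_num),
    isProbabilityMeasure_twoPointMeasure ht₀.le ht₁.le, hsupp_p.trans hsupp_q.symm,
    Dtri_eq_zero (hsupp_q ▸ twoPointMeasure_compl_pair) (hsupp_p ▸ twoPointMeasure_compl_pair),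
    ?_⟩
  calc (0 : ℝ≥0∞) < ENNReal.ofReal (1 / 2 - 1 / 4) * ENNReal.ofReal 1 := by norm_num
    _ ≤ DWbeta β₁ p q := hcost
    _ ≤ DWsym β₁ β₂ p q := le_self_add

/-- **Proposition 4, part 3b.** For any finite β₁, β₂ > 0 there are
probability measures on ℝ with equal supports (hence `D_△(p, q) = 0`) but
`D_W^{β₁,β₂}(p, q) > 0`. -/
theorem support_alignment_not_relaxed_alignment
    (β₁ β₂ : ℝ) (hβ₁ : 0 < β₁) (hβ₂ : 0 < β₂) :
    ∃ p q : Measure ℝ, IsProbabilityMeasure p ∧ IsProbabilityMeasure q ∧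
      msupport p = msupport q ∧ Dtri p q = 0 ∧ 0 < DWsym β₁ β₂ p q :=
  support_alignment_not_relaxed_alignment_general β₁ β₂ hβ₁
end
end
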